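/- arXiv:2205.12418 — 7 statements merged into one kernel-verified Lean document; each statement's English description precedes it below -/
import Mathlib

section
/- In a finite-horizon MDP, for any two deterministic policies π and π_k, V₁^π(s₁) − V₁^{π_k}(s₁) = E_{π_k}[∑_{h=1}^H 𝟙[Ẽ_{k,h}]·(V_h^π(s_h) − V_h^{π_k}(s_h))], where Ẽ_{k,h} is the event that step h is the first time along the trajectory (generated by π_k) at which π_k(s_h) ≠ π(s_h). -/
open Finset MeasureTheory Classical
open scoped Classical

/-- A finite-horizon tabular MDP with horizon `H`, fixed initial state `s0`,
time-dependent transition kernel `P` and deterministic rewards `r` in `[0,1]`.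
Steps are indexed `1, …, H` (so value functions live on `1, …, H+1`). -/
structure TabMDP (S A : Type) [Fintype S] [Fintype A] where
  H : ℕ
  s0 : S
  P : ℕ → S → A → S → ℝ
  r : ℕ → S → A → ℝ
  P_nonneg : ∀ h s a s', 0 ≤ P h s a s'
  P_sum_one : ∀ h s a, ∑ s', P h s a s' = 1
  r_nonneg : ∀ h s a, 0 ≤ r h s a
  r_le_one : ∀ h s a, r h s a ≤ 1

namespace TabMDP

variable {S A : Type} [Fintype S] [Nonempty S] [Fintype A] [Nonempty A]

/-- Value function of a deterministic policy, computed with `n` remaining steps starting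
at step `h`: `Vfuel M π n h s = E_π[∑_{h'=h}^{h+n-1} r(s_{h'},a_{h'}) | s_h = s]`. -/
noncomputable def Vfuel (M : TabMDP S A) (π : ℕ → S → A) : ℕ → ℕ → S → ℝ
  | 0, _, _ => 0
  | n + 1, h, s =>
      M.r h s (π h s) + ∑ s', M.P h s (π h s) s' * Vfuel M π n (h + 1) s'

/-- `V M π h s = V^π_h(s)`, for `1 ≤ h ≤ H+1`. -/
noncomputable def V (M : TabMDP S A) (π : ℕ → S → A) (h : ℕ) (s : S) : ℝ :=
  Vfuel M π (M.H + 1 - h) h s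

/-- Q-function of a deterministic policy. -/
noncomputable def Q (M : TabMDP S A) (π : ℕ → S → A) (h : ℕ) (s : S) (a : A) : ℝ :=
  M.r h s a + ∑ s', M.P h s a s' * V M π (h + 1) s'

/-- Optimal value function with `n` remaining steps. -/
noncomputable def VstarFuel (M : TabMDP S A) : ℕ → ℕ → S → ℝ
  | 0, _, _ => 0
  | n + 1, h, s =>
      ⨆ a : A, (M.r h s a + ∑ s', M.P h s a s' * VstarFuel M n (h + 1) s')

/-- `Vstar M h s = V^*_h(s)`. -/
noncomputable def Vstar (M : TabMDP S A) (h : ℕ) (s : S) : ℝ :=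
  VstarFuel M (M.H + 1 - h) h s

/-- Optimal Q-function `Q^*_h(s,a)`. -/
noncomputable def Qstar (M : TabMDP S A) (h : ℕ) (s : S) (a : A) : ℝ :=
  M.r h s a + ∑ s', M.P h s a s' * Vstar M (h + 1) s'

/-- Suboptimality gap `Δ_h(s,a) = V^*_h(s) - Q^*_h(s,a)`. -/
noncomputable def gap (M : TabMDP S A) (h : ℕ) (s : S) (a : A) : ℝ :=
  Vstar M h s - Qstar M h s a

/-- A deterministic policy is optimal if it achieves the optimal value at the initial state. -/
def IsOptimal (M : TabMDP S A) (π : ℕ → S → A) : Prop :=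
  V M π 1 M.s0 = Vstar M 1 M.s0

/-- State occupancy `d^π(s_h) = Pr(S_h = s_h | S_1 = s0, π)`, for `1 ≤ h ≤ H`. -/
noncomputable def stateOcc (M : TabMDP S A) (π : ℕ → S → A) : ℕ → S → ℝ
  | 0 => fun _ => 0
  | 1 => fun s => if s = M.s0 then 1 else 0
  | h + 2 => fun s' => ∑ s, stateOcc M π (h + 1) s * M.P (h + 1) s (π (h + 1) s) s'

/-- State-action occupancy `d^π(s_h, a_h)` of a deterministic policy. -/
noncomputable def occ (M : TabMDP S A) (π : ℕ → S → A) (h : ℕ) (s : S) (a : A) : ℝ :=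
  if π h s = a then stateOcc M π h s else 0

/-- Expected sum of a per-step function along trajectories of `π` started at `(h,s)` with
`n` remaining steps: `pathSum M π g n h s = E_π[∑_{h'=h}^{h+n-1} g(h', s_{h'}, a_{h'}) | s_h = s]`. -/
noncomputable def pathSum (M : TabMDP S A) (π : ℕ → S → A) (g : ℕ → S → A → ℝ) :
    ℕ → ℕ → S → ℝ
  | 0, _, _ => 0
  | n + 1, h, s =>
      g h s (π h s) + ∑ s', M.P h s (π h s) s' * pathSum M π g n (h + 1) s'

/-- `E_{π_k}[∑_{h'} 𝟙[Ẽ_{h'}] g(h', s_{h'})]` where `Ẽ_{h'}` is the event that step `h'` is the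
first step along the trajectory (generated by `πk`) at which `πk(s_{h'}) ≠ π(s_{h'})`;
computed by the recursion that stops and pays `g h s` at the first disagreeing state. -/
noncomputable def firstDisagreeExp (M : TabMDP S A) (πk π : ℕ → S → A) (g : ℕ → S → ℝ) :
    ℕ → ℕ → S → ℝ
  | 0, _, _ => 0
  | n + 1, h, s =>
      if πk h s ≠ π h s then g h s
      else ∑ s', M.P h s (πk h s) s' * firstDisagreeExp M πk π g n (h + 1) s'

/-- Probability, under trajectories of `πk` started at `s0` at step 1, that `πk` disagrees
with `π` at some visited state within steps `1, …, H`. -/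
noncomputable def disagreeProb (M : TabMDP S A) (πk π : ℕ → S → A) : ℝ :=
  firstDisagreeExp M πk π (fun _ _ => 1) M.H 1 M.s0

/-! ### Stochastic policies -/

/-- A stochastic policy `πs h s a` = probability of taking `a` at state `s`, step `h`. -/
def IsStochasticPolicy (πs : ℕ → S → A → ℝ) : Prop :=
  ∀ h s, (∀ a, 0 ≤ πs h s a) ∧ ∑ a, πs h s a = 1

/-- State occupancy of a stochastic policy. -/
noncomputable def stateOccS (M : TabMDP S A) (πs : ℕ → S → A → ℝ) : ℕ → S → ℝ
  | 0 => fun _ => 0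
  | 1 => fun s => if s = M.s0 then 1 else 0
  | h + 2 => fun s' =>
      ∑ s, ∑ a, stateOccS M πs (h + 1) s * πs (h + 1) s a * M.P (h + 1) s a s'

/-- State-action occupancy of a stochastic policy. -/
noncomputable def occS (M : TabMDP S A) (πs : ℕ → S → A → ℝ) (h : ℕ) (s : S) (a : A) : ℝ :=
  stateOccS M πs h s * πs h s a

/-- Value function of a stochastic policy (with fuel). -/
noncomputable def VSfuel (M : TabMDP S A) (πs : ℕ → S → A → ℝ) : ℕ → ℕ → S → ℝ
  | 0, _, _ => 0
  | n + 1, h, s =>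
      ∑ a, πs h s a * (M.r h s a + ∑ s', M.P h s a s' * VSfuel M πs n (h + 1) s')

/-- Value of a stochastic policy. -/
noncomputable def VS (M : TabMDP S A) (πs : ℕ → S → A → ℝ) (h : ℕ) (s : S) : ℝ :=
  VSfuel M πs (M.H + 1 - h) h s

/-- A stochastic policy is optimal if it achieves the optimal value at the initial state. -/
def IsOptimalS (M : TabMDP S A) (πs : ℕ → S → A → ℝ) : Prop :=
  VS M πs 1 M.s0 = Vstar M 1 M.s0

/-- `d^*_{h,min}(s_h,a_h)`: the minimal positive occupancy of `(s_h,a_h)` over deterministic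
optimal policies that reach `(s_h, a_h)`. -/
noncomputable def dhmin (M : TabMDP S A) (h : ℕ) (s : S) (a : A) : ℝ :=
  sInf {x : ℝ | ∃ π : ℕ → S → A, IsOptimal M π ∧ occ M π h s a = x ∧ 0 < x}

/-- `Z_{h,div}`: state-action pairs whose state is reachable by some deterministic optimal
policy but unreachable by some other deterministic optimal policy. -/
def Zdiv (M : TabMDP S A) (h : ℕ) : Set (S × A) :=
  {p | ∃ π π' : ℕ → S → A, IsOptimal M π ∧ IsOptimal M π' ∧
        0 < stateOcc M π h p.1 ∧ stateOcc M π' h p.1 = 0}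

/-! ### Pessimistic value iteration -/

/-- PVI pessimistic value estimate (with fuel), given the empirical model `Phat` and
bonus `b`:  `V̂_h(s) = max_a max{r(s,a) + P̂_h V̂_{h+1}(s,a) - b_h(s,a), 0}`. -/
noncomputable def VhatFuel (M : TabMDP S A) (Phat : ℕ → S → A → S → ℝ)
    (b : ℕ → S → A → ℝ) : ℕ → ℕ → S → ℝ
  | 0, _, _ => 0
  | n + 1, h, s =>
      ⨆ a : A,
        max (M.r h s a + (∑ s', Phat h s a s' * VhatFuel M Phat b n (h + 1) s') - b h s a) 0

/-- `V̂_h(s)`, the PVI pessimistic value estimate. -/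
noncomputable def Vhat (M : TabMDP S A) (Phat : ℕ → S → A → S → ℝ)
    (b : ℕ → S → A → ℝ) (h : ℕ) (s : S) : ℝ :=
  VhatFuel M Phat b (M.H + 1 - h) h s

/-- `Q̂_h(s,a) = max{r(s,a) + P̂_h V̂_{h+1}(s,a) - b_h(s,a), 0}`, the PVI pessimistic
Q estimate. -/
noncomputable def Qhat (M : TabMDP S A) (Phat : ℕ → S → A → S → ℝ)
    (b : ℕ → S → A → ℝ) (h : ℕ) (s : S) (a : A) : ℝ :=
  max (M.r h s a + (∑ s', Phat h s a s' * Vhat M Phat b (h + 1) s') - b h s a) 0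

/-- PVI surplus `E_h(s,a) := r(s,a) + P_h V̂_{h+1}(s,a) - Q̂_h(s,a)`. -/
noncomputable def surplus (M : TabMDP S A) (Phat : ℕ → S → A → S → ℝ)
    (b : ℕ → S → A → ℝ) (h : ℕ) (s : S) (a : A) : ℝ :=
  M.r h s a + (∑ s', M.P h s a s' * Vhat M Phat b (h + 1) s') - Qhat M Phat b h s a

/-- Value of a deterministic policy for the reward `r - Ebar` (clipped-surplus value `V̈`),
with fuel. -/
noncomputable def VclipFuel (M : TabMDP S A) (π : ℕ → S → A) (Ebar : ℕ → S → A → ℝ) :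
    ℕ → ℕ → S → ℝ
  | 0, _, _ => 0
  | n + 1, h, s =>
      (M.r h s (π h s) - Ebar h s (π h s)) +
        ∑ s', M.P h s (π h s) s' * VclipFuel M π Ebar n (h + 1) s'

/-- `V̈^π_h(s)`: value of `π` when the reward is reduced by `Ebar`. -/
noncomputable def Vclip (M : TabMDP S A) (π : ℕ → S → A) (Ebar : ℕ → S → A → ℝ)
    (h : ℕ) (s : S) : ℝ :=
  VclipFuel M π Ebar (M.H + 1 - h) h s

end TabMDP

/-- `Clip[x | ε] := x · 𝟙[x ≥ ε]`. -/
noncomputable def clip (x ε : ℝ) : ℝ := if ε ≤ x then x else 0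

lemma value_fd_aux
    {S A : Type} [Fintype S] [Nonempty S] [Fintype A] [Nonempty A]
    (M : TabMDP S A) (π πk : ℕ → S → A) :
    ∀ n h s, h + n = M.H + 1 →
      TabMDP.Vfuel M π n h s - TabMDP.Vfuel M πk n h s =
        TabMDP.firstDisagreeExp M πk π
          (fun h s => TabMDP.V M π h s - TabMDP.V M πk h s) n h s := by
  intro n
  induction n with
  | zero => intro h s _; simp [TabMDP.Vfuel, TabMDP.firstDisagreeExp]
  | succ n ih =>
    intro h s hyp
    rw [TabMDP.firstDisagreeExp]
    by_cases hd : πk h s ≠ π h s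
    · rw [if_pos hd]
      have : M.H + 1 - h = n + 1 := by omega
      simp only [TabMDP.V, this]
    · rw [if_neg hd]
      push_neg at hd
      simp only [TabMDP.Vfuel, hd]
      rw [add_sub_add_comm, sub_self, zero_add, ← Finset.sum_sub_distrib]
      refine Finset.sum_congr rfl fun s' _ => ?_
      rw [← mul_sub, ih (h+1) s' (by omega)]

/-- Value decomposition along the first disagreement: for deterministic policies `π` and `πk`,
`V₁^π(s₁) − V₁^{πk}(s₁) = E_{πk}[∑_{h=1}^H 𝟙[Ẽ_h] (V_h^π(s_h) − V_h^{πk}(s_h))]`,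
where `Ẽ_h` is the event that step `h` is the first step (along the trajectory generated by
`πk`) at which `πk(s_h) ≠ π(s_h)`. -/
theorem value_first_disagreement_decomposition
    {S A : Type} [Fintype S] [Nonempty S] [Fintype A] [Nonempty A]
    (M : TabMDP S A) (π πk : ℕ → S → A) :
    TabMDP.V M π 1 M.s0 - TabMDP.V M πk 1 M.s0 =
      TabMDP.firstDisagreeExp M πk π
        (fun h s => TabMDP.V M π h s - TabMDP.V M πk h s) M.H 1 M.s0 := by
  have := value_fd_aux M π πk M.H 1 M.s0 (by omega)
  simpa [TabMDP.V] using this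
end

section
/- In a finite-horizon MDP, for deterministic policies π and π_k, and for every (s_h, a_h), the state-action occupancies satisfy d^{π_k}(s_h,a_h) ≥ d^π(s_h,a_h) − min{Pr(π_k disagrees with π at some visited state | trajectory ∼ π_k), d^π(s_h,a_h)}. -/
open Finset MeasureTheory Classical
open scoped Classical

set_option linter.unusedSectionVars false
namespace TabMDP
variable {S A : Type} [Fintype S] [Nonempty S] [Fintype A] [Nonempty A]

noncomputable def aOcc (M : TabMDP S A) (πk π : ℕ → S → A) : ℕ → S → ℝ
  | 0 => fun _ => 0
  | 1 => fun s => if s = M.s0 then 1 else 0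
  | h + 2 => fun s' => ∑ s,
      (if πk (h+1) s = π (h+1) s then aOcc M πk π (h+1) s else 0) * M.P (h+1) s (π (h+1) s) s'

noncomputable def dmass (M : TabMDP S A) (πk π : ℕ → S → A) (h : ℕ) : ℝ :=
  ∑ s, if πk h s = π h s then 0 else aOcc M πk π h s

lemma stateOcc_nonneg (M : TabMDP S A) (π : ℕ → S → A) : ∀ h s, 0 ≤ stateOcc M π h s := by
  intro h
  induction h with
  | zero => intro s; simp [stateOcc]
  | succ n ih =>
    cases n with
    | zero => intro s; simp only [stateOcc]; positivity
    | succ m =>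
      intro s
      exact Finset.sum_nonneg fun t _ => mul_nonneg (ih t) (M.P_nonneg _ _ _ _)

lemma aOcc_nonneg (M : TabMDP S A) (πk π : ℕ → S → A) : ∀ h s, 0 ≤ aOcc M πk π h s := by
  intro h
  induction h with
  | zero => intro s; simp [aOcc]
  | succ n ih =>
    cases n with
    | zero => intro s; simp only [aOcc]; positivity
    | succ m =>
      intro s
      refine Finset.sum_nonneg fun t _ => mul_nonneg ?_ (M.P_nonneg _ _ _ _)
      split
      · exact ih t
      · exact le_refl 0

lemma dmass_nonneg (M : TabMDP S A) (πk π : ℕ → S → A) (h : ℕ) : 0 ≤ dmass M πk π h := by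
  refine Finset.sum_nonneg fun s _ => ?_
  split
  · exact le_refl 0
  · exact aOcc_nonneg M πk π h s

lemma aOcc_le_stateOcc (M : TabMDP S A) (πk π : ℕ → S → A) :
    ∀ h s, aOcc M πk π h s ≤ stateOcc M π h s := by
  intro h
  induction h with
  | zero => intro s; simp [aOcc, stateOcc]
  | succ n ih =>
    cases n with
    | zero => intro s; simp [aOcc, stateOcc]
    | succ m =>
      intro s
      refine Finset.sum_le_sum fun t _ => ?_
      refine mul_le_mul_of_nonneg_right ?_ (M.P_nonneg _ _ _ _)
      split
      · exact ih t
      · exact stateOcc_nonneg M π _ t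

lemma aOcc_le_stateOcc_k (M : TabMDP S A) (πk π : ℕ → S → A) :
    ∀ h s, aOcc M πk π h s ≤ stateOcc M πk h s := by
  intro h
  induction h with
  | zero => intro s; simp [aOcc, stateOcc]
  | succ n ih =>
    cases n with
    | zero => intro s; simp [aOcc, stateOcc]
    | succ m =>
      intro s
      refine Finset.sum_le_sum fun t _ => ?_
      by_cases hag : πk (m+1) t = π (m+1) t
      · rw [if_pos hag, ← hag]
        exact mul_le_mul_of_nonneg_right (ih t) (M.P_nonneg _ _ _ _)
      · rw [if_neg hag, zero_mul]
        exact mul_nonneg (stateOcc_nonneg M πk _ t) (M.P_nonneg _ _ _ _)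

lemma err_eq (M : TabMDP S A) (πk π : ℕ → S → A) :
    ∀ h, 1 ≤ h → ∑ s, (stateOcc M π h s - aOcc M πk π h s)
      = ∑ j ∈ Finset.range (h - 1), dmass M πk π (j + 1) := by
  intro h
  induction h with
  | zero => intro hc; exact absurd hc (by omega)
  | succ n ih =>
    cases n with
    | zero => intro _; simp [stateOcc, aOcc]
    | succ m =>
      intro _
      have hrec : ∑ s, (stateOcc M π (m+2) s - aOcc M πk π (m+2) s)
          = ∑ s, (stateOcc M π (m+1) s
              - (if πk (m+1) s = π (m+1) s then aOcc M πk π (m+1) s else 0)) := by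
        simp only [stateOcc, aOcc, ← Finset.sum_sub_distrib, ← sub_mul]
        rw [Finset.sum_comm]
        refine Finset.sum_congr rfl fun t _ => ?_
        rw [← Finset.mul_sum, M.P_sum_one, mul_one]
      rw [hrec]
      have hsplit : ∀ s : S, stateOcc M π (m+1) s
            - (if πk (m+1) s = π (m+1) s then aOcc M πk π (m+1) s else 0)
          = (stateOcc M π (m+1) s - aOcc M πk π (m+1) s)
            + (if πk (m+1) s = π (m+1) s then 0 else aOcc M πk π (m+1) s) := by
        intro s; split <;> ring
      simp only [hsplit, Finset.sum_add_distrib]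
      rw [ih (by omega)]
      have h2 : (m + 2 - 1) = (m + 1 - 1) + 1 := rfl
      rw [h2, Finset.sum_range_succ]
      rfl

lemma aOcc_fde (M : TabMDP S A) (πk π : ℕ → S → A) :
    ∀ n h, 1 ≤ h → ∑ s, aOcc M πk π h s * firstDisagreeExp M πk π (fun _ _ => 1) n h s
      = ∑ j ∈ Finset.range n, dmass M πk π (h + j) := by
  intro n
  induction n with
  | zero => intro h _; simp [firstDisagreeExp]
  | succ n ih =>
    intro h hh
    obtain ⟨m, rfl⟩ : ∃ m, h = m + 1 := ⟨h - 1, by omega⟩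
    have key : ∀ s, aOcc M πk π (m+1) s
          * firstDisagreeExp M πk π (fun _ _ => 1) (n+1) (m+1) s
        = (if πk (m+1) s = π (m+1) s then 0 else aOcc M πk π (m+1) s)
          + ∑ s', (if πk (m+1) s = π (m+1) s then aOcc M πk π (m+1) s else 0)
              * M.P (m+1) s (π (m+1) s) s'
              * firstDisagreeExp M πk π (fun _ _ => 1) n (m+2) s' := by
      intro s
      simp only [firstDisagreeExp, ne_eq]
      by_cases hag : πk (m+1) s = π (m+1) s
      · rw [if_neg (not_not_intro hag), if_pos hag]
        simp only [if_pos hag, zero_add, Finset.mul_sum]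
        refine Finset.sum_congr rfl fun t _ => ?_
        rw [hag]; ring
      · rw [if_pos hag, if_neg hag]
        simp only [if_neg hag, zero_mul, mul_one, Finset.sum_const_zero, add_zero]
    simp only [key, Finset.sum_add_distrib]
    have h2 : ∑ s, ∑ s', (if πk (m+1) s = π (m+1) s then aOcc M πk π (m+1) s else 0)
              * M.P (m+1) s (π (m+1) s) s'
              * firstDisagreeExp M πk π (fun _ _ => 1) n (m+2) s'
        = ∑ s', aOcc M πk π (m+2) s' * firstDisagreeExp M πk π (fun _ _ => 1) n (m+2) s' := by
      rw [Finset.sum_comm]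
      refine Finset.sum_congr rfl fun t _ => ?_
      show _ = (∑ s, (if πk (m+1) s = π (m+1) s then aOcc M πk π (m+1) s else 0)
          * M.P (m+1) s (π (m+1) s) t) * firstDisagreeExp M πk π (fun _ _ => 1) n (m+2) t
      rw [Finset.sum_mul]
    rw [h2, ih (m+2) (by omega), Finset.sum_range_succ']
    have e1 : (∑ s, if πk (m+1) s = π (m+1) s then 0 else aOcc M πk π (m+1) s)
        = dmass M πk π (m + 1 + 0) := by simp [dmass]
    have e2 : ∑ j ∈ Finset.range n, dmass M πk π (m + 2 + j)
        = ∑ j ∈ Finset.range n, dmass M πk π (m + 1 + (j + 1)) :=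
      Finset.sum_congr rfl fun j _ => by rw [show m + 1 + (j + 1) = m + 2 + j by omega]
    rw [e1, e2]; ring

lemma disagreeProb_eq (M : TabMDP S A) (πk π : ℕ → S → A) :
    disagreeProb M πk π = ∑ j ∈ Finset.range M.H, dmass M πk π (j + 1) := by
  have h := aOcc_fde M πk π M.H 1 le_rfl
  have h1 : ∑ s, aOcc M πk π 1 s * firstDisagreeExp M πk π (fun _ _ => 1) M.H 1 s
      = disagreeProb M πk π := by
    simp only [aOcc, ite_mul, one_mul, zero_mul, disagreeProb]
    rw [Finset.sum_ite_eq' Finset.univ M.s0]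
    simp
  rw [← h1, h]
  exact Finset.sum_congr rfl fun j _ => by rw [add_comm]
end TabMDP
/-- Occupancy comparison: for every `(h, s_h, a_h)` with `1 ≤ h ≤ H`,
`d^{πk}(s_h,a_h) ≥ d^π(s_h,a_h) − min{ Pr(πk disagrees with π at some visited state | τ ∼ πk),
d^π(s_h,a_h) }`. -/
theorem occupancy_disagreement_bound
    {S A : Type} [Fintype S] [Nonempty S] [Fintype A] [Nonempty A]
    (M : TabMDP S A) (π πk : ℕ → S → A)
    (h : ℕ) (hh1 : 1 ≤ h) (hhH : h ≤ M.H) (s : S) (a : A) :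
    TabMDP.occ M π h s a - min (TabMDP.disagreeProb M πk π) (TabMDP.occ M π h s a) ≤
      TabMDP.occ M πk h s a := by
  classical
  have hknn : 0 ≤ TabMDP.occ M πk h s a := by
    unfold TabMDP.occ
    split
    · exact TabMDP.stateOcc_nonneg M πk h s
    · exact le_refl 0
  have hDnn : 0 ≤ TabMDP.disagreeProb M πk π := by
    rw [TabMDP.disagreeProb_eq]
    exact Finset.sum_nonneg fun j _ => TabMDP.dmass_nonneg M πk π (j + 1)
  rcases le_or_gt (TabMDP.disagreeProb M πk π) (TabMDP.occ M π h s a) with hc | hc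
  · rw [min_eq_left hc]
    -- main bound: occ π - D ≤ occ πk
    have herr0 : ∀ t, 0 ≤ TabMDP.stateOcc M π h t - TabMDP.aOcc M πk π h t :=
      fun t => sub_nonneg.mpr (TabMDP.aOcc_le_stateOcc M πk π h t)
    have herr : TabMDP.stateOcc M π h s - TabMDP.aOcc M πk π h s
        ≤ ∑ j ∈ Finset.range (h - 1), TabMDP.dmass M πk π (j + 1) := by
      rw [← TabMDP.err_eq M πk π h hh1]
      exact Finset.single_le_sum (fun t _ => herr0 t) (Finset.mem_univ s)
    have hsub : ∀ m : ℕ, m ≤ M.H →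
        ∑ j ∈ Finset.range m, TabMDP.dmass M πk π (j + 1) ≤ TabMDP.disagreeProb M πk π := by
      intro m hm
      rw [TabMDP.disagreeProb_eq]
      exact Finset.sum_le_sum_of_subset_of_nonneg
        (Finset.range_subset_range.mpr hm)
        (fun j _ _ => TabMDP.dmass_nonneg M πk π (j + 1))
    unfold TabMDP.occ
    by_cases hπ : π h s = a
    · rw [if_pos hπ]
      by_cases hπk : πk h s = a
      · rw [if_pos hπk]
        have h1 : TabMDP.stateOcc M π h s - TabMDP.stateOcc M πk h s
            ≤ TabMDP.stateOcc M π h s - TabMDP.aOcc M πk π h s :=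
          sub_le_sub_left (TabMDP.aOcc_le_stateOcc_k M πk π h s) _
        have := h1.trans (herr.trans (hsub (h - 1) (by omega)))
        linarith
      · rw [if_neg hπk]
        -- disagreement at (h,s)
        have hdis : πk h s ≠ π h s := fun hEq => hπk (hEq.trans hπ)
        have haux : TabMDP.aOcc M πk π h s ≤ TabMDP.dmass M πk π h := by
          unfold TabMDP.dmass
          have := Finset.single_le_sum
            (f := fun t => if πk h t = π h t then 0 else TabMDP.aOcc M πk π h t)
            (fun t _ => by
              split
              · exact le_refl 0
              · exact TabMDP.aOcc_nonneg M πk π h t) (Finset.mem_univ s)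
          rwa [if_neg hdis] at this
        have hsplit : TabMDP.stateOcc M π h s
            ≤ ∑ j ∈ Finset.range (h - 1), TabMDP.dmass M πk π (j + 1)
              + TabMDP.dmass M πk π h := by
          have := add_le_add herr haux
          linarith
        have hstep : ∑ j ∈ Finset.range (h - 1), TabMDP.dmass M πk π (j + 1)
              + TabMDP.dmass M πk π h
            = ∑ j ∈ Finset.range h, TabMDP.dmass M πk π (j + 1) := by
          have h3 : h = (h - 1) + 1 := by omega
          rw [h3, Finset.sum_range_succ, ← h3]
        have := hsplit.trans (hstep.le.trans (hsub h hhH))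
        linarith
    · rw [if_neg hπ]
      have hnn : (0:ℝ) ≤ if πk h s = a then TabMDP.stateOcc M πk h s else 0 := by
        split
        · exact TabMDP.stateOcc_nonneg M πk h s
        · exact le_refl 0
      linarith
  · rw [min_eq_right hc.le]
    linarith
end

section
/- If the optimal deterministic policy π* of a tabular MDP with minimal gap Δ_min is unique (up to occupancy), then for any sequence of deterministic policies π₁,...,π_K: ∑_{k=1}^K d^{π_k}(s_h,a_h) ≥ K·d^{π*}(s_h,a_h) − (1/Δ_min)·∑_{k=1}^K (V₁*(s₁) − V₁^{π_k}(s₁)) for every (h, s_h, a_h). -/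
open Finset MeasureTheory Classical
open scoped Classical

section AccOccAux
set_option linter.unusedSectionVars false
set_option maxHeartbeats 1000000

open TabMDP

variable {S A : Type} [Fintype S] [Nonempty S] [Fintype A] [Nonempty A]

lemma AO.stateOcc_nonneg (M : TabMDP S A) (π : ℕ → S → A) : ∀ h s, 0 ≤ M.stateOcc π h s
  | 0, s => by simp [TabMDP.stateOcc]
  | 1, s => by simp only [TabMDP.stateOcc]; positivity
  | (h+2), s' => by
      simp only [TabMDP.stateOcc]
      exact Finset.sum_nonneg fun s _ =>
        mul_nonneg (AO.stateOcc_nonneg M π (h+1) s) (M.P_nonneg _ _ _ _)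

/-- Occupancy of trajectories of `π` that have agreed with `πs` at every step so far. -/
noncomputable def AO.agOcc (M : TabMDP S A) (π πs : ℕ → S → A) : ℕ → S → ℝ
  | 0 => fun _ => 0
  | 1 => fun s => if s = M.s0 then 1 else 0
  | h + 2 => fun s' => ∑ s,
      (if π (h+1) s = πs (h+1) s then AO.agOcc M π πs (h+1) s * M.P (h+1) s (π (h+1) s) s' else 0)

lemma AO.agOcc_nonneg (M : TabMDP S A) (π πs : ℕ → S → A) : ∀ h s, 0 ≤ AO.agOcc M π πs h s
  | 0, s => by simp [AO.agOcc]
  | 1, s => by simp only [AO.agOcc]; positivity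
  | (h+2), s' => by
      simp only [AO.agOcc]
      refine Finset.sum_nonneg fun s _ => ?_
      split
      · exact mul_nonneg (AO.agOcc_nonneg M π πs (h+1) s) (M.P_nonneg _ _ _ _)
      · exact le_refl 0

lemma AO.agOcc_le_left (M : TabMDP S A) (π πs : ℕ → S → A) :
    ∀ h s, AO.agOcc M π πs h s ≤ M.stateOcc π h s
  | 0, s => by simp [AO.agOcc, TabMDP.stateOcc]
  | 1, s => by simp [AO.agOcc, TabMDP.stateOcc]
  | (h+2), s' => by
      simp only [AO.agOcc, TabMDP.stateOcc]
      refine Finset.sum_le_sum fun s _ => ?_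
      split
      · exact mul_le_mul_of_nonneg_right (AO.agOcc_le_left M π πs (h+1) s) (M.P_nonneg _ _ _ _)
      · exact mul_nonneg (AO.stateOcc_nonneg M π (h+1) s) (M.P_nonneg _ _ _ _)

lemma AO.agOcc_le_right (M : TabMDP S A) (π πs : ℕ → S → A) :
    ∀ h s, AO.agOcc M π πs h s ≤ M.stateOcc πs h s
  | 0, s => by simp [AO.agOcc, TabMDP.stateOcc]
  | 1, s => by simp [AO.agOcc, TabMDP.stateOcc]
  | (h+2), s' => by
      simp only [AO.agOcc, TabMDP.stateOcc]
      refine Finset.sum_le_sum fun s _ => ?_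
      by_cases hag : π (h+1) s = πs (h+1) s
      · rw [if_pos hag, hag]
        exact mul_le_mul_of_nonneg_right (AO.agOcc_le_right M π πs (h+1) s) (M.P_nonneg _ _ _ _)
      · rw [if_neg hag]
        exact mul_nonneg (AO.stateOcc_nonneg M πs (h+1) s) (M.P_nonneg _ _ _ _)

/-- Accumulated first-disagreement mass within steps `1, …, h-1`. -/
noncomputable def AO.D (M : TabMDP S A) (π πs : ℕ → S → A) (h : ℕ) : ℝ :=
  ∑ h' ∈ Finset.Ico 1 h, ∑ s, (if π h' s ≠ πs h' s then AO.agOcc M π πs h' s else 0)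

lemma AO.D_inner_nonneg (M : TabMDP S A) (π πs : ℕ → S → A) (h' : ℕ) (s : S) :
    0 ≤ (if π h' s ≠ πs h' s then AO.agOcc M π πs h' s else 0) := by
  split
  · exact AO.agOcc_nonneg M π πs h' s
  · exact le_refl 0

lemma AO.D_nonneg (M : TabMDP S A) (π πs : ℕ → S → A) (h : ℕ) : 0 ≤ AO.D M π πs h :=
  Finset.sum_nonneg fun h' _ => Finset.sum_nonneg fun s _ => AO.D_inner_nonneg M π πs h' s

lemma AO.D_mono (M : TabMDP S A) (π πs : ℕ → S → A) {h h' : ℕ} (hh : h ≤ h') :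
    AO.D M π πs h ≤ AO.D M π πs h' := by
  unfold AO.D
  refine Finset.sum_le_sum_of_subset_of_nonneg (Finset.Ico_subset_Ico le_rfl hh) ?_
  intro i _ _
  exact Finset.sum_nonneg fun s _ => AO.D_inner_nonneg M π πs i s

lemma AO.sum_sub_agOcc (M : TabMDP S A) (π πs : ℕ → S → A) :
    ∀ h, 1 ≤ h → ∑ s, (M.stateOcc πs h s - AO.agOcc M π πs h s) = AO.D M π πs h := by
  intro h
  induction h with
  | zero => omega
  | succ h ih =>
    intro _
    by_cases h1 : 1 ≤ h
    · obtain ⟨m, rfl⟩ : ∃ m, h = m + 1 := ⟨h - 1, by omega⟩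
      have key : ∑ s, (M.stateOcc πs (m+2) s - AO.agOcc M π πs (m+2) s)
          = (∑ s, (M.stateOcc πs (m+1) s - AO.agOcc M π πs (m+1) s))
            + ∑ s, (if π (m+1) s ≠ πs (m+1) s then AO.agOcc M π πs (m+1) s else 0) := by
        rw [← Finset.sum_add_distrib]
        simp only [TabMDP.stateOcc, AO.agOcc, ← Finset.sum_sub_distrib]
        rw [Finset.sum_comm]
        refine Finset.sum_congr rfl fun s _ => ?_
        rw [Finset.sum_sub_distrib, ← Finset.mul_sum, M.P_sum_one, mul_one]
        by_cases hag : π (m+1) s = πs (m+1) s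
        · have hb : ∀ x : S, (if π (m+1) s = πs (m+1) s
              then AO.agOcc M π πs (m+1) s * M.P (m+1) s (π (m+1) s) x else 0)
              = AO.agOcc M π πs (m+1) s * M.P (m+1) s (πs (m+1) s) x := fun x => by
            rw [if_pos hag, hag]
          rw [Finset.sum_congr rfl (fun x _ => hb x), ← Finset.mul_sum, M.P_sum_one, mul_one,
            if_neg (not_not_intro hag)]
          ring
        · have hb : ∀ x : S, (if π (m+1) s = πs (m+1) s
              then AO.agOcc M π πs (m+1) s * M.P (m+1) s (π (m+1) s) x else 0) = 0 :=
            fun x => if_neg hag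
          rw [Finset.sum_congr rfl (fun x _ => hb x), Finset.sum_const_zero, if_pos hag]
          ring
      rw [key, ih h1]
      unfold AO.D
      rw [Finset.sum_Ico_succ_top (by omega : 1 ≤ m + 1)]
    · obtain rfl : h = 0 := by omega
      simp [TabMDP.stateOcc, AO.agOcc, AO.D]

lemma AO.stateOcc_congr (M : TabMDP S A) (π π' : ℕ → S → A) :
    ∀ h, (∀ h', h' < h → π h' = π' h') → ∀ s, M.stateOcc π h s = M.stateOcc π' h s
  | 0, _, s => by simp [TabMDP.stateOcc]
  | 1, _, s => by simp [TabMDP.stateOcc]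
  | (h+2), hagree, s' => by
      simp only [TabMDP.stateOcc]
      refine Finset.sum_congr rfl fun s _ => ?_
      rw [AO.stateOcc_congr M π π' (h+1) (fun h' hh' => hagree h' (by omega)) s,
        hagree (h+1) (by omega)]

lemma AO.Vstar_eq (M : TabMDP S A) {h : ℕ} (hh : h ≤ M.H) (s : S) :
    M.Vstar h s = ⨆ a : A, M.Qstar h s a := by
  have h1 : M.H + 1 - h = (M.H - h) + 1 := by omega
  have h2 : M.H + 1 - (h + 1) = M.H - h := by omega
  rw [TabMDP.Vstar, h1]
  simp only [TabMDP.VstarFuel, TabMDP.Qstar, TabMDP.Vstar, h2]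

lemma AO.exists_greedy (M : TabMDP S A) (h : ℕ) (s : S) :
    ∃ a : A, ∀ b : A, M.Qstar h s b ≤ M.Qstar h s a := Finite.exists_max _

noncomputable def AO.greedy (M : TabMDP S A) : ℕ → S → A :=
  fun h s => Classical.choose (AO.exists_greedy M h s)

lemma AO.greedy_Qstar (M : TabMDP S A) {h : ℕ} (hh : h ≤ M.H) (s : S) :
    M.Qstar h s (AO.greedy M h s) = M.Vstar h s := by
  have hmax := Classical.choose_spec (AO.exists_greedy M h s)
  rw [AO.Vstar_eq M hh s]
  exact le_antisymm (le_ciSup (Set.Finite.bddAbove (Set.finite_range _)) _)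
    (ciSup_le fun b => hmax b)

lemma AO.Qstar_le_Vstar (M : TabMDP S A) {h : ℕ} (hh : h ≤ M.H) (s : S) (a : A) :
    M.Qstar h s a ≤ M.Vstar h s := by
  rw [AO.Vstar_eq M hh s]
  exact le_ciSup (Set.Finite.bddAbove (Set.finite_range _)) a

lemma AO.gap_nonneg (M : TabMDP S A) {h : ℕ} (hh : h ≤ M.H) (s : S) (a : A) :
    0 ≤ M.gap h s a :=
  sub_nonneg.mpr (AO.Qstar_le_Vstar M hh s a)

lemma AO.gap_greedy (M : TabMDP S A) {h : ℕ} (hh : h ≤ M.H) (s : S) :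
    M.gap h s (AO.greedy M h s) = 0 := by
  rw [TabMDP.gap, AO.greedy_Qstar M hh s, sub_self]

lemma AO.pdl_fuel (M : TabMDP S A) (π : ℕ → S → A) :
    ∀ n h s, h + n = M.H + 1 →
      M.VstarFuel n h s - M.Vfuel π n h s = M.pathSum π M.gap n h s
  | 0, h, s, _ => by simp [TabMDP.VstarFuel, TabMDP.Vfuel, TabMDP.pathSum]
  | (n+1), h, s, hn => by
      have hV : M.VstarFuel (n+1) h s = M.Vstar h s := by
        rw [TabMDP.Vstar]; congr 1; omega
      have hVs : ∀ s', M.Vstar (h+1) s' = M.VstarFuel n (h+1) s' := by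
        intro s'; rw [TabMDP.Vstar]; congr 1; omega
      simp only [TabMDP.Vfuel, TabMDP.pathSum]
      have expand : ∑ s', M.P h s (π h s) s' * M.pathSum π M.gap n (h+1) s'
          = (∑ s', M.P h s (π h s) s' * M.VstarFuel n (h+1) s')
            - ∑ s', M.P h s (π h s) s' * M.Vfuel π n (h+1) s' := by
        rw [← Finset.sum_sub_distrib]
        exact Finset.sum_congr rfl fun s' _ => by
          rw [← AO.pdl_fuel M π n (h+1) s' (by omega), mul_sub]
      have hq : ∑ s', M.P h s (π h s) s' * M.Vstar (h+1) s'
          = ∑ s', M.P h s (π h s) s' * M.VstarFuel n (h+1) s' :=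
        Finset.sum_congr rfl fun s' _ => by rw [hVs s']
      rw [hV, expand, TabMDP.gap, TabMDP.Qstar, hq]
      ring

lemma AO.pathSum_occ (M : TabMDP S A) (π : ℕ → S → A) (g : ℕ → S → A → ℝ) :
    ∀ h, 1 ≤ h → ∀ n, M.pathSum π g (n + (h - 1)) 1 M.s0
      = (∑ h' ∈ Finset.Ico 1 h, ∑ s, M.stateOcc π h' s * g h' s (π h' s))
        + ∑ s, M.stateOcc π h s * M.pathSum π g n h s := by
  intro h
  induction h with
  | zero => omega
  | succ h ih =>
    intro _ n
    by_cases h1 : 1 ≤ h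
    · have step := ih h1 (n+1)
      have harith : n + 1 + (h - 1) = n + (h + 1 - 1) := by omega
      rw [harith] at step
      rw [step, Finset.sum_Ico_succ_top (h1 : 1 ≤ h)]
      obtain ⟨m, rfl⟩ : ∃ m, h = m + 1 := ⟨h - 1, by omega⟩
      simp only [TabMDP.pathSum]
      have hocc : ∀ s' : S, M.stateOcc π (m+2) s'
          = ∑ s, M.stateOcc π (m+1) s * M.P (m+1) s (π (m+1) s) s' :=
        fun s' => by simp only [TabMDP.stateOcc]
      have main : ∑ s, M.stateOcc π (m+1) s *
            (g (m+1) s (π (m+1) s)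
              + ∑ s', M.P (m+1) s (π (m+1) s) s' * M.pathSum π g n (m+1+1) s')
          = (∑ s, M.stateOcc π (m+1) s * g (m+1) s (π (m+1) s))
            + ∑ s', M.stateOcc π (m+2) s' * M.pathSum π g n (m+2) s' := by
        simp only [mul_add, Finset.mul_sum]
        rw [Finset.sum_add_distrib]
        congr 1
        rw [Finset.sum_comm]
        refine Finset.sum_congr rfl fun s' _ => ?_
        rw [hocc s', Finset.sum_mul]
        exact Finset.sum_congr rfl fun s _ => by ring
      rw [main, add_assoc]
    · obtain rfl : h = 0 := by omega
      simp [TabMDP.stateOcc, ite_mul, Finset.sum_ite_eq']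

lemma AO.pdl (M : TabMDP S A) (π : ℕ → S → A) :
    M.Vstar 1 M.s0 - M.V π 1 M.s0
      = ∑ h ∈ Finset.Ico 1 (M.H + 1), ∑ s, M.stateOcc π h s * M.gap h s (π h s) := by
  have h1 : M.Vstar 1 M.s0 - M.V π 1 M.s0 = M.pathSum π M.gap M.H 1 M.s0 := by
    rw [TabMDP.Vstar, TabMDP.V, (by omega : M.H + 1 - 1 = M.H)]
    exact AO.pdl_fuel M π M.H 1 M.s0 (by omega)
  have h2 := AO.pathSum_occ M π M.gap (M.H + 1) (by omega) 0
  simp only [TabMDP.pathSum, mul_zero, Finset.sum_const_zero, add_zero] at h2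
  rw [(by omega : 0 + (M.H + 1 - 1) = M.H)] at h2
  rw [h1, h2]

lemma AO.opt_term_zero (M : TabMDP S A) {h : ℕ} (hh1 : 1 ≤ h) (hh2 : h ≤ M.H)
    (π : ℕ → S → A) (hoptπ : M.IsOptimal π) (s : S) :
    M.stateOcc π h s * M.gap h s (π h s) = 0 := by
  have hsum := AO.pdl M π
  rw [TabMDP.IsOptimal] at hoptπ
  have hz : (0:ℝ) = ∑ h' ∈ Finset.Ico 1 (M.H + 1),
      ∑ s, M.stateOcc π h' s * M.gap h' s (π h' s) := by
    rw [← hsum, hoptπ, sub_self]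
  have hnn : ∀ h' ∈ Finset.Ico 1 (M.H + 1),
      (0:ℝ) ≤ ∑ s, M.stateOcc π h' s * M.gap h' s (π h' s) := by
    intro h' hm
    rw [Finset.mem_Ico] at hm
    exact Finset.sum_nonneg fun s' _ =>
      mul_nonneg (AO.stateOcc_nonneg M π h' s') (AO.gap_nonneg M (by omega) s' _)
  have houter := (Finset.sum_eq_zero_iff_of_nonneg hnn).mp hz.symm
  have hin := houter h (Finset.mem_Ico.mpr ⟨hh1, by omega⟩)
  have hinnn : ∀ s' ∈ (Finset.univ : Finset S),
      (0:ℝ) ≤ M.stateOcc π h s' * M.gap h s' (π h s') := fun s' _ =>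
    mul_nonneg (AO.stateOcc_nonneg M π h s') (AO.gap_nonneg M hh2 s' _)
  exact (Finset.sum_eq_zero_iff_of_nonneg hinnn).mp hin s (Finset.mem_univ s)

lemma AO.gap_big (M : TabMDP S A) (Δmin : ℝ)
    (hgap : ∀ h s a, 1 ≤ h → h ≤ M.H → M.gap h s a = 0 ∨ Δmin ≤ M.gap h s a)
    (πstar : ℕ → S → A) (hopt : M.IsOptimal πstar)
    (huniq : ∀ π' : ℕ → S → A, M.IsOptimal π' → ∀ h s a, M.occ π' h s a = M.occ πstar h s a)
    (π : ℕ → S → A) {h : ℕ} (hh1 : 1 ≤ h) (hh2 : h ≤ M.H) (s : S)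
    (hdis : π h s ≠ πstar h s) (hpos : 0 < AO.agOcc M π πstar h s) :
    Δmin ≤ M.gap h s (π h s) := by
  rcases hgap h s (π h s) hh1 hh2 with h0 | hbig
  · exfalso
    set π'' : ℕ → S → A := fun m t => if m < h then πstar m t
      else if m = h ∧ t = s then π h s else AO.greedy M m t with hπ''
    have hoccEq : ∀ h' ≤ h, ∀ t, M.stateOcc π'' h' t = M.stateOcc πstar h' t := by
      intro h' hle t
      refine AO.stateOcc_congr M π'' πstar h' (fun m hm => funext fun t' => ?_) t
      simp [hπ'', (by omega : m < h)]
    have hopt'' : M.IsOptimal π'' := by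
      rw [TabMDP.IsOptimal]
      have hpdl := AO.pdl M π''
      have hzero : ∑ h' ∈ Finset.Ico 1 (M.H + 1),
          ∑ t, M.stateOcc π'' h' t * M.gap h' t (π'' h' t) = 0 := by
        refine Finset.sum_eq_zero fun h' hm => Finset.sum_eq_zero fun t _ => ?_
        rw [Finset.mem_Ico] at hm
        rcases lt_trichotomy h' h with hlt | heq | hgt
        · have he : π'' h' t = πstar h' t := by simp [hπ'', hlt]
          rw [he, hoccEq h' (le_of_lt hlt) t]
          exact AO.opt_term_zero M hm.1 (by omega) πstar hopt t
        · subst heq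
          by_cases hts : t = s
          · subst hts
            have he : π'' h' t = π h' t := by simp [hπ'']
            rw [he, h0, mul_zero]
          · have he : π'' h' t = AO.greedy M h' t := by simp [hπ'', hts]
            rw [he, AO.gap_greedy M hh2 t, mul_zero]
        · have he : π'' h' t = AO.greedy M h' t := by
            simp only [hπ'']
            rw [if_neg (by omega : ¬ h' < h),
              if_neg (fun hc => absurd hc.1 (by omega : h' ≠ h))]
          rw [he, AO.gap_greedy M (by omega : h' ≤ M.H) t, mul_zero]
      rw [hzero] at hpdl
      linarith
    have huq := huniq π'' hopt'' h s (π h s)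
    have hπ''a : π'' h s = π h s := by simp [hπ'']
    have h1 : M.occ π'' h s (π h s) = M.stateOcc πstar h s := by
      rw [TabMDP.occ, if_pos hπ''a, hoccEq h le_rfl s]
    have h2 : M.occ πstar h s (π h s) = 0 := by
      rw [TabMDP.occ, if_neg (fun hc => hdis hc.symm)]
    have h3 : 0 < M.stateOcc πstar h s :=
      lt_of_lt_of_le hpos (AO.agOcc_le_right M π πstar h s)
    rw [h1, h2] at huq
    linarith
  · exact hbig

lemma AO.per_policy (M : TabMDP S A) (Δmin : ℝ) (hΔmin : 0 < Δmin)
    (hgap : ∀ h s a, 1 ≤ h → h ≤ M.H → M.gap h s a = 0 ∨ Δmin ≤ M.gap h s a)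
    (πstar : ℕ → S → A) (hopt : M.IsOptimal πstar)
    (huniq : ∀ π' : ℕ → S → A, M.IsOptimal π' → ∀ h s a, M.occ π' h s a = M.occ πstar h s a)
    (π : ℕ → S → A) {h : ℕ} (hh1 : 1 ≤ h) (hh2 : h ≤ M.H) (s : S) (a : A) :
    M.occ πstar h s a - (1 / Δmin) * (M.Vstar 1 M.s0 - M.V π 1 M.s0) ≤ M.occ π h s a := by
  have hDle : Δmin * AO.D M π πstar (M.H + 1) ≤ M.Vstar 1 M.s0 - M.V π 1 M.s0 := by
    rw [AO.pdl M π, AO.D, Finset.mul_sum]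
    refine Finset.sum_le_sum fun h' hm => ?_
    rw [Finset.mul_sum]
    refine Finset.sum_le_sum fun t _ => ?_
    rw [Finset.mem_Ico] at hm
    by_cases hdis : π h' t ≠ πstar h' t
    · rw [if_pos hdis]
      rcases eq_or_lt_of_le (AO.agOcc_nonneg M π πstar h' t) with hz | hpos
      · rw [← hz, mul_zero]
        exact mul_nonneg (AO.stateOcc_nonneg M π h' t) (AO.gap_nonneg M (by omega) t _)
      · have hg := AO.gap_big M Δmin hgap πstar hopt huniq π hm.1 (by omega) t hdis hpos
        have step1 : Δmin * AO.agOcc M π πstar h' t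
            ≤ AO.agOcc M π πstar h' t * M.gap h' t (π h' t) := by
          rw [mul_comm]
          exact mul_le_mul_of_nonneg_left hg (le_of_lt hpos)
        exact step1.trans (mul_le_mul_of_nonneg_right (AO.agOcc_le_left M π πstar h' t)
          (AO.gap_nonneg M (by omega) t _))
    · rw [if_neg hdis, mul_zero]
      exact mul_nonneg (AO.stateOcc_nonneg M π h' t) (AO.gap_nonneg M (by omega) t _)
  have hDle2 : AO.D M π πstar (M.H + 1)
      ≤ (1 / Δmin) * (M.Vstar 1 M.s0 - M.V π 1 M.s0) := by
    calc AO.D M π πstar (M.H + 1) = (1 / Δmin) * (Δmin * AO.D M π πstar (M.H + 1)) := by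
          field_simp
      _ ≤ (1 / Δmin) * (M.Vstar 1 M.s0 - M.V π 1 M.s0) :=
          mul_le_mul_of_nonneg_left hDle (by positivity)
  have hcouple : M.occ πstar h s a - M.occ π h s a ≤ AO.D M π πstar (M.H + 1) := by
    rw [TabMDP.occ, TabMDP.occ]
    by_cases hsa : πstar h s = a
    · rw [if_pos hsa]
      have hsub : ∀ t : S, (0:ℝ) ≤ M.stateOcc πstar h t - AO.agOcc M π πstar h t :=
        fun t => sub_nonneg.mpr (AO.agOcc_le_right M π πstar h t)
      have hsingle : M.stateOcc πstar h s - AO.agOcc M π πstar h s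
          ≤ ∑ t, (M.stateOcc πstar h t - AO.agOcc M π πstar h t) :=
        Finset.single_le_sum (fun t _ => hsub t) (Finset.mem_univ s)
      rw [AO.sum_sub_agOcc M π πstar h hh1] at hsingle
      by_cases hpa : π h s = a
      · rw [if_pos hpa]
        have hl := AO.agOcc_le_left M π πstar h s
        have hmono := AO.D_mono M π πstar (show h ≤ M.H + 1 by omega)
        linarith
      · rw [if_neg hpa]
        have hdis : π h s ≠ πstar h s := fun hc => hpa (hc.trans hsa)
        have h4 : AO.agOcc M π πstar h s
            ≤ ∑ t, (if π h t ≠ πstar h t then AO.agOcc M π πstar h t else 0) := by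
          have he : AO.agOcc M π πstar h s
              = (if π h s ≠ πstar h s then AO.agOcc M π πstar h s else 0) := by
            rw [if_pos hdis]
          rw [he]
          exact Finset.single_le_sum (fun t _ => AO.D_inner_nonneg M π πstar h t)
            (Finset.mem_univ s)
        have h5 : AO.D M π πstar h
              + ∑ t, (if π h t ≠ πstar h t then AO.agOcc M π πstar h t else 0)
            = AO.D M π πstar (h + 1) := by
          rw [AO.D, AO.D, Finset.sum_Ico_succ_top (show 1 ≤ h by omega)]
        have hmono := AO.D_mono M π πstar (show h + 1 ≤ M.H + 1 by omega)
        linarith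
    · rw [if_neg hsa]
      have hnn : (0:ℝ) ≤ if π h s = a then M.stateOcc π h s else 0 := by
        split
        · exact AO.stateOcc_nonneg M π h s
        · exact le_refl 0
      have hD0 := AO.D_nonneg M π πstar (M.H + 1)
      linarith
  linarith

end AccOccAux

/-- If the deterministic optimal policy is unique up to occupancy, then for any sequence of
deterministic policies `π_1, …, π_K` and every `(h, s_h, a_h)`:
`∑_{k=1}^K d^{π_k}(s_h,a_h) ≥ K d^{π*}(s_h,a_h) − (1/Δmin) ∑_{k=1}^K (V₁*(s₁) − V₁^{π_k}(s₁))`. -/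
theorem accumulated_occupancy_unique_optimal
    {S A : Type} [Fintype S] [Nonempty S] [Fintype A] [Nonempty A]
    (M : TabMDP S A) (Δmin : ℝ) (hΔmin : 0 < Δmin)
    (hgap : ∀ h s a, 1 ≤ h → h ≤ M.H → TabMDP.gap M h s a = 0 ∨ Δmin ≤ TabMDP.gap M h s a)
    (πstar : ℕ → S → A) (hopt : TabMDP.IsOptimal M πstar)
    (huniq : ∀ π' : ℕ → S → A, TabMDP.IsOptimal M π' →
      ∀ h s a, TabMDP.occ M π' h s a = TabMDP.occ M πstar h s a)
    (K : ℕ) (π : Fin K → ℕ → S → A) :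
    ∀ h s a, 1 ≤ h → h ≤ M.H →
      (K : ℝ) * TabMDP.occ M πstar h s a -
          (1 / Δmin) * ∑ i, (TabMDP.Vstar M 1 M.s0 - TabMDP.V M (π i) 1 M.s0) ≤
        ∑ i, TabMDP.occ M (π i) h s a := by
  
  intro h s a hh1 hh2
  have key : ∀ i : Fin K,
      TabMDP.occ M πstar h s a
          - (1 / Δmin) * (TabMDP.Vstar M 1 M.s0 - TabMDP.V M (π i) 1 M.s0)
        ≤ TabMDP.occ M (π i) h s a := fun i =>
    AO.per_policy M Δmin hΔmin hgap πstar hopt huniq (π i) hh1 hh2 s a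
  have hsum := Finset.sum_le_sum (fun i (_ : i ∈ (Finset.univ : Finset (Fin K))) => key i)
  have lhs_eq : ∑ i : Fin K, (TabMDP.occ M πstar h s a
        - (1 / Δmin) * (TabMDP.Vstar M 1 M.s0 - TabMDP.V M (π i) 1 M.s0))
      = (K:ℝ) * TabMDP.occ M πstar h s a
        - (1 / Δmin) * ∑ i, (TabMDP.Vstar M 1 M.s0 - TabMDP.V M (π i) 1 M.s0) := by
    rw [Finset.sum_sub_distrib, Finset.sum_const, Finset.card_univ, Fintype.card_fin,
      ← Finset.mul_sum, nsmul_eq_mul]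
  rw [lhs_eq] at hsum
  exact hsum
end

section
/- In the pessimistic value iteration algorithm, on the event that for all (h,s_h,a_h) the empirical Bellman backup error satisfies |P̂_h V̂_{h+1}(s_h,a_h) − P_h V̂_{h+1}(s_h,a_h)| < b_h(s_h,a_h), the estimated Q-function satisfies Q̂_h(s_h,a_h) ≤ Q_h^{π_Q̂}(s_h,a_h) ≤ Q_h*(s_h,a_h) for all h, s_h, a_h, where π_Q̂ is the greedy policy with respect to Q̂. -/
open Finset MeasureTheory Classical
open scoped Classical

namespace PVIAux

open TabMDP

variable {S A : Type} [Fintype S] [Nonempty S] [Fintype A] [Nonempty A]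

lemma Vfuel_nonneg (M : TabMDP S A) (π : ℕ → S → A) :
    ∀ n h s, 0 ≤ Vfuel M π n h s := by
  intro n
  induction n with
  | zero => intro h s; simp [Vfuel]
  | succ n ih =>
    intro h s
    simp only [Vfuel]
    have h1 : 0 ≤ ∑ s', M.P h s (π h s) s' * Vfuel M π n (h + 1) s' :=
      Finset.sum_nonneg fun s' _ => mul_nonneg (M.P_nonneg _ _ _ _) (ih _ _)
    have h2 := M.r_nonneg h s (π h s)
    linarith

lemma V_nonneg (M : TabMDP S A) (π : ℕ → S → A) (h : ℕ) (s : S) : 0 ≤ V M π h s :=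
  Vfuel_nonneg M π _ _ _

lemma V_eq_Q (M : TabMDP S A) (π : ℕ → S → A) (h : ℕ) (hh : h ≤ M.H) (s : S) :
    V M π h s = Q M π h s (π h s) := by
  have e : M.H + 1 - h = (M.H + 1 - (h + 1)) + 1 := by omega
  simp only [V, Q, e, Vfuel]

lemma Vstar_eq (M : TabMDP S A) (h : ℕ) (hh : h ≤ M.H) (s : S) :
    Vstar M h s = ⨆ a : A, Qstar M h s a := by
  have e : M.H + 1 - h = (M.H + 1 - (h + 1)) + 1 := by omega
  simp only [Vstar, Qstar, e, VstarFuel]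

lemma Qhat_le_Q (M : TabMDP S A) (Phat : ℕ → S → A → S → ℝ) (b : ℕ → S → A → ℝ)
    (πg : ℕ → S → A) (h : ℕ) (s : S) (a : A)
    (hev : |(∑ s', Phat h s a s' * Vhat M Phat b (h + 1) s') -
        ∑ s', M.P h s a s' * Vhat M Phat b (h + 1) s'| < b h s a)
    (hV : ∀ s', Vhat M Phat b (h + 1) s' ≤ V M πg (h + 1) s') :
    Qhat M Phat b h s a ≤ Q M πg h s a := by
  have habs := (abs_lt.mp hev).2
  have hsum : (∑ s', M.P h s a s' * Vhat M Phat b (h + 1) s') ≤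
      ∑ s', M.P h s a s' * V M πg (h + 1) s' :=
    Finset.sum_le_sum fun s' _ => mul_le_mul_of_nonneg_left (hV s') (M.P_nonneg _ _ _ _)
  have hQ0 : 0 ≤ Q M πg h s a := by
    have h1 : 0 ≤ ∑ s', M.P h s a s' * V M πg (h + 1) s' :=
      Finset.sum_nonneg fun s' _ => mul_nonneg (M.P_nonneg _ _ _ _) (V_nonneg _ _ _ _)
    have h2 := M.r_nonneg h s a
    simp only [Q]; linarith
  have : M.r h s a + (∑ s', Phat h s a s' * Vhat M Phat b (h + 1) s') - b h s a ≤
      Q M πg h s a := by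
    simp only [Q]; linarith
  exact max_le this hQ0

end PVIAux

/-- PVI underestimation: on the event that the empirical Bellman backup error is strictly
below the bonus at every `(h,s,a)`, the PVI estimate satisfies
`Q̂_h(s,a) ≤ Q_h^{π_Q̂}(s,a) ≤ Q_h^*(s,a)` for all `(h,s,a)`, where `π_Q̂` is any policy
that is greedy with respect to `Q̂`. -/
theorem pvi_underestimation
    {S A : Type} [Fintype S] [Nonempty S] [Fintype A] [Nonempty A]
    (M : TabMDP S A) (Phat : ℕ → S → A → S → ℝ) (b : ℕ → S → A → ℝ)
    (hevent : ∀ h s a, 1 ≤ h → h ≤ M.H →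
      |(∑ s', Phat h s a s' * TabMDP.Vhat M Phat b (h + 1) s') -
          ∑ s', M.P h s a s' * TabMDP.Vhat M Phat b (h + 1) s'| < b h s a)
    (πg : ℕ → S → A)
    (hgreedy : ∀ h s, TabMDP.Vhat M Phat b h s = TabMDP.Qhat M Phat b h s (πg h s)) :
    ∀ h s a, 1 ≤ h → h ≤ M.H →
      TabMDP.Qhat M Phat b h s a ≤ TabMDP.Q M πg h s a ∧
        TabMDP.Q M πg h s a ≤ TabMDP.Qstar M h s a := by
  open TabMDP PVIAux in
  -- main induction on remaining fuel: value bounds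
  have key : ∀ n h, M.H + 1 = h + n → 1 ≤ h → ∀ s,
      Vhat M Phat b h s ≤ V M πg h s ∧ V M πg h s ≤ Vstar M h s := by
    intro n
    induction n with
    | zero =>
      intro h he h1 s
      have e : M.H + 1 - h = 0 := by omega
      simp [Vhat, TabMDP.V, Vstar, e, VhatFuel, Vfuel, VstarFuel]
    | succ n ih =>
      intro h he h1 s
      have h2 : h ≤ M.H := by omega
      have ih' := ih (h + 1) (by omega) (by omega)
      constructor
      · rw [hgreedy h s, V_eq_Q M πg h h2]
        exact Qhat_le_Q M Phat b πg h s (πg h s)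
          (hevent h s (πg h s) h1 h2) (fun s' => (ih' s').1)
      · rw [V_eq_Q M πg h h2, Vstar_eq M h h2]
        have hQ : TabMDP.Q M πg h s (πg h s) ≤ Qstar M h s (πg h s) := by
          have : (∑ s', M.P h s (πg h s) s' * V M πg (h + 1) s') ≤
              ∑ s', M.P h s (πg h s) s' * Vstar M (h + 1) s' :=
            Finset.sum_le_sum fun s' _ =>
              mul_le_mul_of_nonneg_left (ih' s').2 (M.P_nonneg _ _ _ _)
          simp only [TabMDP.Q, Qstar]; linarith
        exact hQ.trans (le_ciSup (Set.Finite.bddAbove (Set.finite_range _)) (πg h s))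
  intro h s a h1 h2
  have ih' := key (M.H - h) (h + 1) (by omega) (by omega)
  constructor
  · exact PVIAux.Qhat_le_Q M Phat b πg h s a (hevent h s a h1 h2) (fun s' => (ih' s').1)
  · have : (∑ s', M.P h s a s' * TabMDP.V M πg (h + 1) s') ≤
        ∑ s', M.P h s a s' * TabMDP.Vstar M (h + 1) s' :=
      Finset.sum_le_sum fun s' _ =>
        mul_le_mul_of_nonneg_left (ih' s').2 (M.P_nonneg _ _ _ _)
    simp only [TabMDP.Q, TabMDP.Qstar]; linarith
end

section
/- Let Ē_{k,h}(s,a) := Clip[E_{k,h}(s,a) | ε] be the clipped surplus with threshold ε, and define the clipped value functions V̈^{π*} backward via the Bellman recursion with reward r − Ē_{k,h}. Then for any optimal policy π*, V̈^{π*}_{k,h}(s_h) ≤ V̂_{k,h}(s_h) + (H−h+1)·ε ≤ V_h^{π^PVI_k}(s_h) + (H−h+1)·ε, assuming the underestimation property V̂_{k,h} ≤ V^{π^PVI_k}_h holds. -/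
open Finset MeasureTheory Classical
open scoped Classical

/-!
Since `Ē ≥ E − ε` and `Q̂_h = r + P_h V̂_{h+1} − E_h`, one step of the Bellman recursion for `V̈`
loses at most `ε` against `Q̂_h(s, π(s)) ≤ V̂_h(s)`; induction over the `H − h + 1` remaining
steps gives the first inequality, and the second is underestimation.
-/

lemma sub_le_clip {x ε : ℝ} (hε : 0 ≤ ε) : x - ε ≤ clip x ε := by
  unfold clip
  split_ifs <;> linarith

lemma Finset.sum_mul_le_sum_mul_add {ι : Type*} [Fintype ι] {w f g : ι → ℝ} {c : ℝ}
    (hw : ∀ i, 0 ≤ w i) (hw1 : ∑ i, w i = 1) (hfg : ∀ i, f i ≤ g i + c) :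
    ∑ i, w i * f i ≤ ∑ i, w i * g i + c :=
  calc ∑ i, w i * f i ≤ ∑ i, w i * (g i + c) :=
        sum_le_sum fun i _ => mul_le_mul_of_nonneg_left (hfg i) (hw i)
    _ = ∑ i, w i * g i + c := by
      simp only [mul_add, sum_add_distrib, ← sum_mul, hw1, one_mul]

namespace TabMDP

variable {S A : Type} [Fintype S] [Fintype A]
  (M : TabMDP S A) (Phat : ℕ → S → A → S → ℝ) (b : ℕ → S → A → ℝ)

lemma Vclip_of_H_lt (π : ℕ → S → A) (Ebar : ℕ → S → A → ℝ) {h : ℕ} (hh : M.H < h) (s : S) :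
    Vclip M π Ebar h s = 0 := by
  rw [Vclip, show M.H + 1 - h = 0 by omega, VclipFuel]

lemma Vclip_of_le_H (π : ℕ → S → A) (Ebar : ℕ → S → A → ℝ) {h : ℕ} (hh : h ≤ M.H) (s : S) :
    Vclip M π Ebar h s = (M.r h s (π h s) - Ebar h s (π h s)) +
      ∑ s', M.P h s (π h s) s' * Vclip M π Ebar (h + 1) s' := by
  rw [Vclip, show M.H + 1 - h = (M.H + 1 - (h + 1)) + 1 by omega, VclipFuel]
  rfl

lemma Vhat_of_H_lt {h : ℕ} (hh : M.H < h) (s : S) : Vhat M Phat b h s = 0 := by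
  rw [Vhat, show M.H + 1 - h = 0 by omega, VhatFuel]

lemma Vhat_of_le_H {h : ℕ} (hh : h ≤ M.H) (s : S) :
    Vhat M Phat b h s = ⨆ a, Qhat M Phat b h s a := by
  rw [Vhat, show M.H + 1 - h = (M.H + 1 - (h + 1)) + 1 by omega, VhatFuel]
  rfl

lemma Qhat_le_Vhat {h : ℕ} (hh : h ≤ M.H) (s : S) (a : A) :
    Qhat M Phat b h s a ≤ Vhat M Phat b h s := by
  rw [Vhat_of_le_H M Phat b hh]
  exact le_ciSup (Set.finite_range _).bddAbove a

lemma Qhat_eq_sub_surplus (h : ℕ) (s : S) (a : A) :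
    Qhat M Phat b h s a =
      M.r h s a + ∑ s', M.P h s a s' * Vhat M Phat b (h + 1) s' - surplus M Phat b h s a := by
  rw [surplus]
  ring

theorem Vclip_clip_surplus_le_Vhat (π : ℕ → S → A) {ε : ℝ} (hε : 0 ≤ ε) (h : ℕ) (s : S) :
    Vclip M π (fun h' s' a' => clip (surplus M Phat b h' s' a') ε) h s ≤
      Vhat M Phat b h s + ((M.H + 1 - h : ℕ) : ℝ) * ε := by
  induction hn : M.H + 1 - h generalizing h s with
  | zero =>
    rw [Vclip_of_H_lt M π _ (by omega), Vhat_of_H_lt M Phat b (by omega)]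
    simp
  | succ n ih =>
    have hh : h ≤ M.H := by omega
    set a := π h s
    calc Vclip M π (fun h' s' a' => clip (surplus M Phat b h' s' a') ε) h s
        ≤ (M.r h s a - (surplus M Phat b h s a - ε)) +
            (∑ s', M.P h s a s' * Vhat M Phat b (h + 1) s' + n * ε) := by
          rw [Vclip_of_le_H M π _ hh]
          gcongr
          · exact sub_le_clip hε
          · exact sum_mul_le_sum_mul_add (M.P_nonneg h s a) (M.P_sum_one h s a)
              fun s' => ih (h + 1) s' (by omega)
      _ = Qhat M Phat b h s a + (n + 1 : ℕ) * ε := by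
          rw [Qhat_eq_sub_surplus]
          push_cast
          ring
      _ ≤ Vhat M Phat b h s + (n + 1 : ℕ) * ε := by
          grw [Qhat_le_Vhat M Phat b hh]

end TabMDP

theorem pvi_clipped_value_bound_general
    {S A : Type} [Fintype S] [Fintype A]
    (M : TabMDP S A) (Phat : ℕ → S → A → S → ℝ) (b : ℕ → S → A → ℝ)
    (πg : ℕ → S → A)
    (ε : ℝ) (hε : 0 ≤ ε)
    (hunder : ∀ h s, 1 ≤ h → h ≤ M.H + 1 →
      TabMDP.Vhat M Phat b h s ≤ TabMDP.V M πg h s)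
    (πst : ℕ → S → A) :
    ∀ h s, 1 ≤ h → h ≤ M.H + 1 →
      TabMDP.Vclip M πst (fun h' s' a' => clip (TabMDP.surplus M Phat b h' s' a') ε) h s ≤
          TabMDP.Vhat M Phat b h s + ((M.H : ℝ) - h + 1) * ε ∧
        TabMDP.Vhat M Phat b h s + ((M.H : ℝ) - h + 1) * ε ≤
          TabMDP.V M πg h s + ((M.H : ℝ) - h + 1) * ε := by
  intro h s h1 h2
  have hsteps : ((M.H + 1 - h : ℕ) : ℝ) = (M.H : ℝ) - h + 1 := by
    push_cast [Nat.cast_sub h2]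
    ring
  refine ⟨?_, by grw [hunder h s h1 h2]⟩
  rw [← hsteps]
  exact TabMDP.Vclip_clip_surplus_le_Vhat M Phat b πst hε h s

/-- Clipped-value comparison.  Let `Ē_h(s,a) := Clip[E_h(s,a) | ε]` be the clipped PVI
surplus and let `V̈^{π*}` be the value of an optimal policy `π*` with reward `r − Ē`.  If the
underestimation property `V̂_h ≤ V_h^{π^PVI}` holds, then for all `h, s`:
`V̈^{π*}_h(s) ≤ V̂_h(s) + (H−h+1) ε ≤ V_h^{π^PVI}(s) + (H−h+1) ε`. -/
theorem pvi_clipped_value_bound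
    {S A : Type} [Fintype S] [Nonempty S] [Fintype A] [Nonempty A]
    (M : TabMDP S A) (Phat : ℕ → S → A → S → ℝ) (b : ℕ → S → A → ℝ)
    (πg : ℕ → S → A)
    (hgreedy : ∀ h s, TabMDP.Vhat M Phat b h s = TabMDP.Qhat M Phat b h s (πg h s))
    (ε : ℝ) (hε : 0 ≤ ε)
    (hunder : ∀ h s, 1 ≤ h → h ≤ M.H + 1 →
      TabMDP.Vhat M Phat b h s ≤ TabMDP.V M πg h s)
    (πst : ℕ → S → A) (hopt : ∀ h s, TabMDP.V M πst h s = TabMDP.Vstar M h s) :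
    ∀ h s, 1 ≤ h → h ≤ M.H + 1 →
      TabMDP.Vclip M πst (fun h' s' a' => clip (TabMDP.surplus M Phat b h' s' a') ε) h s ≤
          TabMDP.Vhat M Phat b h s + ((M.H : ℝ) - h + 1) * ε ∧
        TabMDP.Vhat M Phat b h s + ((M.H : ℝ) - h + 1) * ε ≤
          TabMDP.V M πg h s + ((M.H : ℝ) - h + 1) * ε :=
  pvi_clipped_value_bound_general M Phat b πg ε hε hunder πst
end

section
/- In the tiered UCB/LCB bandit algorithm with bonus √(2α log f(k)/N_i(k)) where f(k) = 1 + 16A²(k+1)², for any arm i with gap Δ_i > 0 and any arm j with Δ_j < Δ_i, the probability that LCB selects arm i at round k while N_j(k) ≥ 8α·log f(k)/(Δ_j − Δ_i)² is at most 2/k^{2α}. -/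
open MeasureTheory

/-- Blessing of pessimism for the tiered UCB/LCB bandit algorithm with bonus
`√(2α log f(k)/N_i(k))`, `f(k) = 1 + 16A²(k+1)²`.  `πE k` is the LCB arm at round `k`
(maximizer of `μ̂_i(k) − √(2α log f(k)/N_i(k))`, encoded by `hsel`), and the Azuma–Hoeffding
deviation bounds are `hconc_up`/`hconc_low`.  Then for any arm `i` with `Δ_i > 0` and any
arm `j` with `Δ_j < Δ_i`, the probability that LCB selects `i` at round `k` while
`N_j(k) ≥ 8α log f(k)/(Δ_j − Δ_i)²` is at most `2/k^{2α}`. -/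
theorem lcb_blessing_of_pessimism
    (Ω : Type*) [MeasurableSpace Ω] (P : Measure Ω) [IsProbabilityMeasure P]
    (A : ℕ) (hA : 2 ≤ A) (α : ℝ) (hα : 1 < α)
    (μ : Fin A → ℝ) (hμ : ∀ i, μ i ∈ Set.Icc (0 : ℝ) 1)
    (Δ : Fin A → ℝ) (hΔdef : ∀ i, Δ i = (⨆ j, μ j) - μ i)
    (f : ℕ → ℝ) (hf : ∀ k, f k = 1 + 16 * (A : ℝ) ^ 2 * ((k : ℝ) + 1) ^ 2)
    (N : ℕ → Fin A → Ω → ℕ) (hatμ : ℕ → Fin A → Ω → ℝ) (πE : ℕ → Ω → Fin A)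
    (hsel : ∀ k ω j,
      hatμ k j ω - Real.sqrt (2 * α * Real.log (f k) / (N k j ω : ℝ)) ≤
        hatμ k (πE k ω) ω -
          Real.sqrt (2 * α * Real.log (f k) / (N k (πE k ω) ω : ℝ)))
    (hconc_up : ∀ k i,
      P {ω | Real.sqrt (2 * α * Real.log (f k) / (N k i ω : ℝ)) ≤ hatμ k i ω - μ i} ≤
        ENNReal.ofReal (1 / (f k) ^ α))
    (hconc_low : ∀ k i,
      P {ω | Real.sqrt (2 * α * Real.log (f k) / (N k i ω : ℝ)) ≤ μ i - hatμ k i ω} ≤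
        ENNReal.ofReal (1 / (f k) ^ α))
    (i j : Fin A) (hi : 0 < Δ i) (hij : Δ j < Δ i) (k : ℕ) (hk : 1 ≤ k) :
    P {ω | πE k ω = i ∧ 8 * α * Real.log (f k) / (Δ j - Δ i) ^ 2 ≤ (N k j ω : ℝ)} ≤
      ENNReal.ofReal (2 / (k : ℝ) ^ (2 * α)) := by

  have hA2 : (2:ℝ) ≤ (A:ℝ) := by exact_mod_cast hA
  have hApos : (0:ℝ) < (A:ℝ) := by linarith
  have hkc : (0:ℝ) ≤ (k:ℝ) := Nat.cast_nonneg k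
  have hfk : 1 < f k := by
    have h : 0 < 16 * (A:ℝ) ^ 2 * ((k:ℝ) + 1) ^ 2 :=
      mul_pos (mul_pos (by norm_num) (pow_pos hApos 2)) (pow_pos (by linarith) 2)
    rw [hf]; linarith
  have hLpos : 0 < Real.log (f k) := Real.log_pos hfk
  have hαpos : 0 < α := by linarith
  have hD : 0 < Δ i - Δ j := by linarith
  have hμij : μ j - μ i = Δ i - Δ j := by
    have h1 := hΔdef i; have h2 := hΔdef j; linarith
  have hsub : {ω | πE k ω = i ∧ 8 * α * Real.log (f k) / (Δ j - Δ i) ^ 2 ≤ (N k j ω : ℝ)}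
      ⊆ {ω | Real.sqrt (2 * α * Real.log (f k) / (N k i ω : ℝ)) ≤ hatμ k i ω - μ i}
        ∪ {ω | Real.sqrt (2 * α * Real.log (f k) / (N k j ω : ℝ)) ≤ μ j - hatμ k j ω} := by
    rintro ω ⟨hpi, hN⟩
    by_contra hcon
    rw [Set.mem_union, not_or] at hcon
    obtain ⟨h1, h2⟩ := hcon
    simp only [Set.mem_setOf_eq, not_le] at h1 h2
    have hDsq : (Δ j - Δ i) ^ 2 = (Δ i - Δ j) ^ 2 := by ring
    have hNj : (0:ℝ) < (N k j ω : ℝ) := by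
      have : 0 < 8 * α * Real.log (f k) / (Δ j - Δ i) ^ 2 := by
        rw [hDsq]; positivity
      linarith
    have hN' : 8 * α * Real.log (f k) ≤ (N k j ω : ℝ) * (Δ i - Δ j) ^ 2 := by
      rw [div_le_iff₀ (by rw [hDsq]; positivity)] at hN
      nlinarith [hN]
    have hratio : 2 * α * Real.log (f k) / (N k j ω : ℝ) ≤ (Δ i - Δ j) ^ 2 / 4 := by
      rw [div_le_div_iff₀ hNj (by norm_num)]
      nlinarith
    have hbj : Real.sqrt (2 * α * Real.log (f k) / (N k j ω : ℝ)) ≤ (Δ i - Δ j) / 2 := by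
      have := Real.sqrt_le_sqrt hratio
      rwa [show (Δ i - Δ j) ^ 2 / 4 = ((Δ i - Δ j) / 2) ^ 2 by ring,
        Real.sqrt_sq (by linarith)] at this
    have hs := hsel k ω j
    rw [hpi] at hs
    linarith
  calc P {ω | πE k ω = i ∧ 8 * α * Real.log (f k) / (Δ j - Δ i) ^ 2 ≤ (N k j ω : ℝ)}
      ≤ P ({ω | Real.sqrt (2 * α * Real.log (f k) / (N k i ω : ℝ)) ≤ hatμ k i ω - μ i}
        ∪ {ω | Real.sqrt (2 * α * Real.log (f k) / (N k j ω : ℝ)) ≤ μ j - hatμ k j ω}) :=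
        measure_mono hsub
    _ ≤ P {ω | Real.sqrt (2 * α * Real.log (f k) / (N k i ω : ℝ)) ≤ hatμ k i ω - μ i}
        + P {ω | Real.sqrt (2 * α * Real.log (f k) / (N k j ω : ℝ)) ≤ μ j - hatμ k j ω} :=
        measure_union_le _ _
    _ ≤ ENNReal.ofReal (1 / (f k) ^ α) + ENNReal.ofReal (1 / (f k) ^ α) :=
        add_le_add (hconc_up k i) (hconc_low k j)
    _ = ENNReal.ofReal (2 / (f k) ^ α) := by
        rw [← ENNReal.ofReal_add (by positivity) (by positivity)]
        norm_num
        ring_nf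
    _ ≤ ENNReal.ofReal (2 / (k : ℝ) ^ (2 * α)) := by
        apply ENNReal.ofReal_le_ofReal
        have hk1 : (1:ℝ) ≤ (k:ℝ) := by exact_mod_cast hk
        have hk0 : (0:ℝ) < (k:ℝ) := by linarith
        have hsq : (k:ℝ) ^ (2 * α) = ((k:ℝ) ^ 2) ^ α := by
          rw [Real.rpow_mul (le_of_lt hk0)]
          norm_num
        have hle : (k:ℝ) ^ 2 ≤ f k := by
          have hA4 : 4 ≤ (A:ℝ) ^ 2 := by nlinarith
          have hm := mul_le_mul_of_nonneg_right hA4 (sq_nonneg ((k:ℝ)+1))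
          rw [hf]; nlinarith [sq_nonneg (k:ℝ), hkc]
        have hle' : (k:ℝ) ^ (2 * α) ≤ (f k) ^ α := by
          rw [hsq]
          exact Real.rpow_le_rpow (by positivity) hle (le_of_lt hαpos)
        have hkpow : 0 < (k:ℝ) ^ (2 * α) := Real.rpow_pos_of_pos hk0 _
        exact div_le_div_of_nonneg_left (by norm_num) hkpow hle'
end

section
/- Let X₁, X₂, ... be a sequence of Bernoulli random variables adapted to a filtration (F_i) with Pr(X_i = 1 | F_{i−1}) = P_i, where P_i is F_{i−1}-measurable. Then for any W > 0: Pr(∃ n: ∑_{i=1}^n X_i < (1/2)∑_{i=1}^n P_i − W) ≤ e^{−W}. -/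
/-!
With `c = 1 - e⁻¹`, convexity gives `exp (-x) ≤ 1 - c x` on `[0, 1]`, hence
`E[exp (-X_{n+1}) | F_n] ≤ 1 - c P_{n+1} ≤ exp (-P_{n+1} / 2)` because `c ≥ 1/2`.
So `M_n = exp (∑_{i ≤ n} (P_i / 2 - X_i))` is a positive supermartingale with `M_0 = 1`, and the
event in question is contained in `{∃ n, M_n ≥ e^W}`. Ville's maximal inequality, obtained by
optional stopping at the first time `M` reaches the level, bounds its probability by `e^{-W}`.
-/

open MeasureTheory Set

theorem Real.exp_neg_le_one_sub_mul {x : ℝ} (hx : x ∈ Icc 0 1) :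
    Real.exp (-x) ≤ 1 - (1 - Real.exp (-1)) * x := by
  have h := convexOn_exp.2 (mem_univ 0) (mem_univ (-1)) (sub_nonneg.2 hx.2) hx.1 (by ring)
  simp only [smul_eq_mul, mul_zero, zero_add, Real.exp_zero, mul_one, mul_neg_one] at h
  linarith

theorem Real.exp_half_mul_one_sub_mul_le_one {p : ℝ} (hp : 0 ≤ p) :
    Real.exp (p / 2) * (1 - (1 - Real.exp (-1)) * p) ≤ 1 :=
  calc Real.exp (p / 2) * (1 - (1 - Real.exp (-1)) * p)
      ≤ Real.exp (p / 2) * Real.exp (-((1 - Real.exp (-1)) * p)) := by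
        gcongr; linarith [Real.add_one_le_exp (-((1 - Real.exp (-1)) * p))]
    _ = Real.exp (p * (Real.exp (-1) - 1 / 2)) := by rw [← Real.exp_add]; ring_nf
    _ ≤ 1 := Real.exp_le_one_iff.2 <|
        mul_nonpos_of_nonneg_of_nonpos hp (by linarith [Real.exp_neg_one_lt_half])

section CondExp

variable {Ω : Type*} {m m₀ : MeasurableSpace Ω} {μ : Measure Ω} [IsFiniteMeasure μ] {f : Ω → ℝ}

theorem ae_condExp_mem_Icc (hm : m ≤ m₀) (hf : Integrable f μ) {a b : ℝ}
    (hab : ∀ᵐ ω ∂μ, f ω ∈ Icc a b) : ∀ᵐ ω ∂μ, μ[f|m] ω ∈ Icc a b := by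
  have hlo := condExp_mono (m := m) (integrable_const a) hf (hab.mono fun _ h => h.1)
  have hhi := condExp_mono (m := m) hf (integrable_const b) (hab.mono fun _ h => h.2)
  rw [condExp_const hm] at hlo hhi
  filter_upwards [hlo, hhi] with ω h₁ h₂ using ⟨h₁, h₂⟩

theorem condExp_const_sub_const_mul (hm : m ≤ m₀) (hf : Integrable f μ) (a c : ℝ) :
    μ[fun ω => a - c * f ω|m] =ᵐ[μ] fun ω => a - c * μ[f|m] ω := by
  have hsub := condExp_sub (m := m) (integrable_const a) (hf.const_mul c)
  rw [condExp_const hm] at hsub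
  filter_upwards [hsub, condExp_smul (m := m) (μ := μ) c f] with ω h₁ h₂
  exact h₁.trans (congrArg (a - ·) h₂)

end CondExp

namespace MeasureTheory.Supermartingale

variable {Ω : Type*} {m : MeasurableSpace Ω} {μ : Measure Ω} [IsFiniteMeasure μ]
  {F : Filtration ℕ m} {M : ℕ → Ω → ℝ}

theorem integral_stoppedValue_le_integral_zero (hM : Supermartingale M F μ)
    {τ : Ω → ℕ∞} (hτ : IsStoppingTime F τ) {N : ℕ} (hτN : ∀ ω, τ ω ≤ N) :
    ∫ ω, stoppedValue M τ ω ∂μ ≤ ∫ ω, M 0 ω ∂μ := by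
  have h := hM.neg.expected_stoppedValue_mono (isStoppingTime_const F 0) hτ
    (fun ω => bot_le) hτN
  simpa [stoppedValue, integral_neg] using h

theorem mul_measure_exists_le_le_integral_zero (hM : Supermartingale M F μ) (hnonneg : 0 ≤ M)
    {ε : ℝ} (hε : 0 ≤ ε) (n : ℕ) :
    ENNReal.ofReal ε * μ {ω | ∃ k ≤ n, ε ≤ M k ω} ≤ ENNReal.ofReal (∫ ω, M 0 ω ∂μ) := by
  set A := {ω | ∃ k ≤ n, ε ≤ M k ω}
  have hA : MeasurableSet A := by
    simp only [A, ofPred_exists]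
    exact .iUnion fun k => (MeasurableSet.const _).inter
      (measurableSet_le measurable_const ((hM.stronglyMeasurable k).measurable.le (F.le k)))
  let τ : Ω → ℕ∞ := fun ω => (hittingBtwn M (Ici ε) 0 n ω : ℕ)
  have hτ : IsStoppingTime F τ :=
    hM.stronglyAdapted.adapted.isStoppingTime_hittingBtwn measurableSet_Ici
  have hτn : ∀ ω, τ ω ≤ n := fun ω => WithTop.coe_le_coe.2 (hittingBtwn_le ω)
  have hint : Integrable (stoppedValue M τ) μ :=
    integrable_stoppedValue ℕ hτ hM.integrable hτn
  have hεA : ∀ ω ∈ A, ε ≤ stoppedValue M τ ω := fun ω ⟨k, hk, hkε⟩ =>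
    stoppedValue_hittingBtwn_mem ⟨k, ⟨Nat.zero_le k, hk⟩, hkε⟩
  calc ENNReal.ofReal ε * μ A = ENNReal.ofReal (ε * μ.real A) := by
        rw [ENNReal.ofReal_mul hε, ofReal_measureReal]
    _ ≤ ENNReal.ofReal (∫ ω, M 0 ω ∂μ) := by
        gcongr
        calc ε * μ.real A ≤ ∫ ω in A, stoppedValue M τ ω ∂μ :=
              setIntegral_ge_of_const_le_real hA (measure_ne_top μ A) hεA hint.integrableOn
          _ ≤ ∫ ω, stoppedValue M τ ω ∂μ :=
              setIntegral_le_integral hint (.of_forall fun ω => hnonneg _ ω)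
          _ ≤ ∫ ω, M 0 ω ∂μ := hM.integral_stoppedValue_le_integral_zero hτ hτn

theorem measure_exists_le_le_integral_zero_div (hM : Supermartingale M F μ) (hnonneg : 0 ≤ M)
    {ε : ℝ} (hε : 0 < ε) :
    μ {ω | ∃ n, ε ≤ M n ω} ≤ ENNReal.ofReal ((∫ ω, M 0 ω ∂μ) / ε) := by
  have hunion : {ω | ∃ n, ε ≤ M n ω} = ⋃ n, {ω | ∃ k ≤ n, ε ≤ M k ω} := by
    ext ω
    simp only [mem_ofPred_eq, mem_iUnion]
    exact ⟨fun ⟨n, h⟩ => ⟨n, n, le_rfl, h⟩, fun ⟨_, k, _, h⟩ => ⟨k, h⟩⟩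
  have hmono : Monotone fun n => {ω | ∃ k ≤ n, ε ≤ M k ω} :=
    fun a b hab ω ⟨k, hk, h⟩ => ⟨k, hk.trans hab, h⟩
  rw [ENNReal.ofReal_div_of_pos hε,
    ENNReal.le_div_iff_mul_le (.inl (by simpa using hε)) (.inl ENNReal.ofReal_ne_top), mul_comm,
    hunion, hmono.measure_iUnion, ENNReal.mul_iSup]
  exact iSup_le (hM.mul_measure_exists_le_le_integral_zero hnonneg hε.le)

end MeasureTheory.Supermartingale

noncomputable def lowerTailProcess {Ω : Type*} (X P : ℕ → Ω → ℝ) (n : ℕ) (ω : Ω) : ℝ :=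
  Real.exp (∑ i ∈ Finset.range n, (P (i + 1) ω / 2 - X (i + 1) ω))

section LowerTailProcess

variable {Ω : Type*} {m : MeasurableSpace Ω} {μ : Measure Ω} {F : Filtration ℕ m}
  {X P : ℕ → Ω → ℝ}

@[simp]
theorem lowerTailProcess_zero : lowerTailProcess X P 0 = 1 := by
  ext; simp [lowerTailProcess]

theorem lowerTailProcess_succ (n : ℕ) :
    lowerTailProcess X P (n + 1) =
      (fun ω => lowerTailProcess X P n ω * Real.exp (P (n + 1) ω / 2)) *
        fun ω => Real.exp (-X (n + 1) ω) := by
  ext ω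
  simp only [lowerTailProcess, Finset.sum_range_succ, Pi.mul_apply, ← Real.exp_add,
    sub_eq_add_neg, add_assoc]

theorem lowerTailProcess_pos (n : ℕ) (ω : Ω) : 0 < lowerTailProcess X P n ω := Real.exp_pos _

theorem stronglyAdapted_lowerTailProcess (hX : ∀ i, StronglyMeasurable[F (i + 1)] (X (i + 1)))
    (hP : ∀ i, StronglyMeasurable[F i] (P (i + 1))) :
    StronglyAdapted F (lowerTailProcess X P) := fun _ =>
  Real.continuous_exp.comp_stronglyMeasurable <| Finset.stronglyMeasurable_fun_sum _ fun i hi =>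
    (((hP i).mono (F.mono (Finset.mem_range.1 hi).le)).measurable.div_const 2
      |>.stronglyMeasurable).sub ((hX i).mono (F.mono (Finset.mem_range.1 hi)))

theorem lowerTailProcess_le {ω : Ω} (hX : ∀ i, 0 ≤ X (i + 1) ω) (hP : ∀ i, P (i + 1) ω ≤ 1)
    (n : ℕ) : lowerTailProcess X P n ω ≤ Real.exp (n / 2) := by
  refine Real.exp_le_exp.2 ?_
  calc ∑ i ∈ Finset.range n, (P (i + 1) ω / 2 - X (i + 1) ω)
      ≤ ∑ _i ∈ Finset.range n, (1 / 2 : ℝ) :=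
        Finset.sum_le_sum fun i _ => by linarith [hX i, hP i]
    _ = n / 2 := by simp [div_eq_mul_inv]

variable [IsFiniteMeasure μ]

theorem integrable_lowerTailProcess (hX : ∀ i, StronglyMeasurable[F (i + 1)] (X (i + 1)))
    (hX₀ : ∀ i ω, 0 ≤ X (i + 1) ω) (hP : ∀ i, StronglyMeasurable[F i] (P (i + 1)))
    (hP₁ : ∀ᵐ ω ∂μ, ∀ i, P (i + 1) ω ≤ 1) (n : ℕ) :
    Integrable (lowerTailProcess X P n) μ := by
  refine .of_bound ((stronglyAdapted_lowerTailProcess hX hP n).mono (F.le n)).aestronglyMeasurable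
    (Real.exp (n / 2)) ?_
  filter_upwards [hP₁] with ω hω
  rw [Real.norm_of_nonneg (lowerTailProcess_pos n ω).le]
  exact lowerTailProcess_le (fun i => hX₀ i ω) hω n

theorem supermartingale_lowerTailProcess (hX : ∀ i, StronglyMeasurable[F (i + 1)] (X (i + 1)))
    (hX₀₁ : ∀ i ω, X (i + 1) ω ∈ Icc 0 1) (hP : ∀ i, StronglyMeasurable[F i] (P (i + 1)))
    (hcond : ∀ i, μ[X (i + 1)|F i] =ᵐ[μ] P (i + 1)) :
    Supermartingale (lowerTailProcess X P) F μ := by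
  have hXint : ∀ i, Integrable (X (i + 1)) μ := fun i =>
    .of_bound ((hX i).mono (F.le _)).aestronglyMeasurable 1 <| .of_forall fun ω => by
      rw [Real.norm_of_nonneg (hX₀₁ i ω).1]; exact (hX₀₁ i ω).2
  have hP₀₁ : ∀ᵐ ω ∂μ, ∀ i, P (i + 1) ω ∈ Icc 0 1 := ae_all_iff.2 fun i => by
    filter_upwards [hcond i, ae_condExp_mem_Icc (F.le i) (hXint i) (.of_forall (hX₀₁ i))]
      with ω h₁ h₂ using h₁ ▸ h₂
  have hint := integrable_lowerTailProcess hX (fun i ω => (hX₀₁ i ω).1) hP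
    (hP₀₁.mono fun ω h i => (h i).2)
  refine supermartingale_nat (stronglyAdapted_lowerTailProcess hX hP) hint fun n => ?_
  set c := 1 - Real.exp (-1)
  have hexpX : Integrable (fun ω => Real.exp (-X (n + 1) ω)) μ :=
    .of_bound (Real.continuous_exp.comp_stronglyMeasurable ((hX n).mono (F.le _)).neg
      |>.aestronglyMeasurable) 1 (.of_forall fun ω => by
        rw [Real.norm_of_nonneg (Real.exp_nonneg _), Real.exp_le_one_iff, neg_nonpos]
        exact (hX₀₁ n ω).1)
  have hpull : μ[lowerTailProcess X P (n + 1)|F n] =ᵐ[μ]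
      (fun ω => lowerTailProcess X P n ω * Real.exp (P (n + 1) ω / 2)) *
        μ[fun ω => Real.exp (-X (n + 1) ω)|F n] := by
    have hMn₁ := hint (n + 1)
    rw [lowerTailProcess_succ] at hMn₁ ⊢
    refine condExp_mul_of_stronglyMeasurable_left ?_ hMn₁ hexpX
    exact (stronglyAdapted_lowerTailProcess hX hP n).mul <|
      Real.continuous_exp.comp_stronglyMeasurable ((hP n).measurable.div_const 2).stronglyMeasurable
  have hexp : μ[fun ω => Real.exp (-X (n + 1) ω)|F n] ≤ᵐ[μ] fun ω => 1 - c * P (n + 1) ω := by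
    have hmono := condExp_mono (m := F n) hexpX
      ((integrable_const 1).sub ((hXint n).const_mul c))
      (.of_forall fun ω => Real.exp_neg_le_one_sub_mul (hX₀₁ n ω))
    filter_upwards [hmono, condExp_const_sub_const_mul (F.le n) (hXint n) 1 c, hcond n]
      with ω h₁ h₂ h₃
    rw [← h₃, ← h₂]
    exact h₁
  filter_upwards [hpull, hexp, hP₀₁] with ω h₁ h₂ h₃
  calc μ[lowerTailProcess X P (n + 1)|F n] ω
      ≤ lowerTailProcess X P n ω * (Real.exp (P (n + 1) ω / 2) * (1 - c * P (n + 1) ω)) := by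
        rw [h₁, Pi.mul_apply, mul_assoc]
        gcongr
        exact (lowerTailProcess_pos n ω).le
    _ ≤ lowerTailProcess X P n ω :=
        mul_le_of_le_one_right (lowerTailProcess_pos n ω).le
          (Real.exp_half_mul_one_sub_mul_le_one (h₃ n).1)

end LowerTailProcess

theorem anytime_bernoulli_lower_tail_general
    (Ω : Type*) {m : MeasurableSpace Ω} (μ : Measure Ω) [IsProbabilityMeasure μ]
    (F : Filtration ℕ m) (X Pi : ℕ → Ω → ℝ)
    (hadapted : ∀ i, StronglyMeasurable[F (i + 1)] (X (i + 1)))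
    (hbern : ∀ i ω, X (i + 1) ω = 0 ∨ X (i + 1) ω = 1)
    (hPmeas : ∀ i, StronglyMeasurable[F i] (Pi (i + 1)))
    (hcond : ∀ i, μ[X (i + 1)|F i] =ᵐ[μ] Pi (i + 1))
    (W : ℝ) :
    μ {ω | ∃ n : ℕ, (∑ i ∈ Finset.range n, X (i + 1) ω) <
        (1 / 2) * (∑ i ∈ Finset.range n, Pi (i + 1) ω) - W} ≤
      ENNReal.ofReal (Real.exp (-W)) := by
  have hX₀₁ : ∀ i ω, X (i + 1) ω ∈ Icc 0 1 := fun i ω => by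
    rcases hbern i ω with h | h <;> simp [h]
  have hM := supermartingale_lowerTailProcess hadapted hX₀₁ hPmeas hcond
  have hsub : {ω | ∃ n : ℕ, (∑ i ∈ Finset.range n, X (i + 1) ω) <
      (1 / 2) * (∑ i ∈ Finset.range n, Pi (i + 1) ω) - W} ⊆
      {ω | ∃ n, Real.exp W ≤ lowerTailProcess X Pi n ω} := by
    rintro ω ⟨n, hn⟩
    refine ⟨n, Real.exp_le_exp.2 ?_⟩
    rw [Finset.sum_sub_distrib, ← Finset.sum_div]
    linarith
  calc _ ≤ _ := measure_mono hsub
    _ ≤ ENNReal.ofReal ((∫ ω, lowerTailProcess X Pi 0 ω ∂μ) / Real.exp W) :=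
        hM.measure_exists_le_le_integral_zero_div (fun n ω => (lowerTailProcess_pos n ω).le)
          (Real.exp_pos W)
    _ = ENNReal.ofReal (Real.exp (-W)) := by simp [Real.exp_neg]

/-- Anytime lower-tail concentration for adapted Bernoulli sums (Lemma 7.4 of
Dann et al. 2017): if `X_{i+1}` is `F_{i+1}`-measurable, `{0,1}`-valued, and
`E[X_{i+1} | F_i] = P_{i+1}` a.e. with `P_{i+1}` being `F_i`-measurable, then for any
`W > 0`, `Pr(∃ n, ∑_{i=1}^n X_i < (1/2) ∑_{i=1}^n P_i − W) ≤ e^{−W}`. -/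
theorem anytime_bernoulli_lower_tail
    (Ω : Type*) {m : MeasurableSpace Ω} (μ : Measure Ω) [IsProbabilityMeasure μ]
    (F : Filtration ℕ m) (X Pi : ℕ → Ω → ℝ)
    (hadapted : ∀ i, StronglyMeasurable[F (i + 1)] (X (i + 1)))
    (hbern : ∀ i ω, X (i + 1) ω = 0 ∨ X (i + 1) ω = 1)
    (hPmeas : ∀ i, StronglyMeasurable[F i] (Pi (i + 1)))
    (hcond : ∀ i, μ[X (i + 1)|F i] =ᵐ[μ] Pi (i + 1))
    (W : ℝ) (hW : 0 < W) :
    μ {ω | ∃ n : ℕ, (∑ i ∈ Finset.range n, X (i + 1) ω) <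
        (1 / 2) * (∑ i ∈ Finset.range n, Pi (i + 1) ω) - W} ≤
      ENNReal.ofReal (Real.exp (-W)) :=
  anytime_bernoulli_lower_tail_general Ω μ F X Pi hadapted hbern hPmeas hcond W
end
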